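/- arXiv:1901.08803 — 3 statements merged into one kernel-verified Lean document; each statement's English description precedes it below -/
import Mathlib

section
/- Let Q be an irreducible conservative generator matrix on a finite state space of size S ≥ 2. Then the principal minor Q'_{SS}, obtained from Q by deleting the last row and last column, has all eigenvalues with strictly negative real part. -/
/-- For an irreducible conservative generator `Q` on `S = n+1 ≥ 2` states, the
principal minor obtained by deleting the last row and column has all its
(complex) eigenvalues with strictly negative real part. -/
theorem minor_eigenvalues_neg_re (n : ℕ) (hn : 1 ≤ n)
    (Q : Matrix (Fin (n + 1)) (Fin (n + 1)) ℝ)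
    (hoff : ∀ i j, i ≠ j → 0 ≤ Q i j)
    (hrow : ∀ i, ∑ j, Q i j = 0)
    (hirr : ∀ i j : Fin (n + 1),
      Relation.ReflTransGen (fun p q => p ≠ q ∧ 0 < Q p q) i j) :
    ∀ μ : ℂ,
      ((Q.submatrix Fin.castSucc Fin.castSucc).map Complex.ofReal).charpoly.IsRoot μ →
        μ.re < 0 := by
  intro μ hroot
  by_contra hre
  push_neg at hre
  haveI : NeZero n := ⟨by omega⟩
  set A : Matrix (Fin n) (Fin n) ℂ :=
    (Q.submatrix Fin.castSucc Fin.castSucc).map Complex.ofReal with hA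
  -- From the root of the charpoly, get det (μ • 1 - A) = 0
  have hdet : (μ • (1 : Matrix (Fin n) (Fin n) ℂ) - A).det = 0 := by
    have h := hroot
    rw [Polynomial.IsRoot, Matrix.charpoly, eval_det,
      Matrix.matPolyEquiv_charmatrix] at h
    simpa [Matrix.scalar, Matrix.smul_one_eq_diagonal, Pi.algebraMap_def] using h
  -- extract an eigenvector
  obtain ⟨v, hv0, hv⟩ := (Matrix.exists_mulVec_eq_zero_iff).mpr hdet
  have hmul : ∀ j, ∑ k, A j k * v k = μ * v j := by
    intro j
    have h := congrFun hv j
    rw [Matrix.sub_mulVec, Matrix.smul_mulVec, Matrix.one_mulVec] at h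
    have h' : μ • v j - A.mulVec v j = 0 := h
    have h2 : A.mulVec v j = μ * v j := by
      rw [sub_eq_zero] at h'; rw [← h']; simp
    rw [← h2]; simp [Matrix.mulVec, dotProduct]
  -- max modulus coordinate
  obtain ⟨i₀, -, hmax⟩ := Finset.exists_max_image (Finset.univ : Finset (Fin n))
    (fun k => ‖v k‖) ⟨⟨0, by omega⟩, Finset.mem_univ _⟩
  set m := ‖v i₀‖ with hm
  have hmax' : ∀ k, ‖v k‖ ≤ m := fun k => hmax k (Finset.mem_univ _)
  have hmpos : 0 < m := by
    by_contra hmp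
    push_neg at hmp
    apply hv0; funext k
    have h1 : ‖v k‖ ≤ 0 := le_trans (hmax' k) hmp
    simpa using norm_eq_zero.mp (le_antisymm h1 (norm_nonneg _))
  -- key equality-case lemma
  have key : ∀ j : Fin n, ‖v j‖ = m →
      Q j.castSucc (Fin.last n) = 0 ∧
      ∀ k : Fin n, k ≠ j → 0 < Q j.castSucc k.castSucc → ‖v k‖ = m := by
    intro j hj
    set a : Fin n → ℝ := fun k => Q j.castSucc k.castSucc with ha
    have haA : ∀ k, A j k = (a k : ℂ) := fun k => rfl
    have hanneg : ∀ k, k ≠ j → 0 ≤ a k := fun k hk =>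
      hoff _ _ (by simpa [Fin.castSucc_inj] using hk.symm)
    set qlast := Q j.castSucc (Fin.last n) with hql
    have hqlast_nonneg : 0 ≤ qlast := hoff _ _ (Fin.castSucc_lt_last j).ne
    -- row sum identity: ∑ k ≠ j, a k = -a j - qlast
    have hsum : ∑ k ∈ Finset.univ.erase j, a k = -a j - qlast := by
      have h0 := hrow j.castSucc
      rw [Fin.sum_univ_castSucc] at h0
      have h1 : ∑ k : Fin n, a k = a j + ∑ k ∈ Finset.univ.erase j, a k :=
        (Finset.add_sum_erase _ _ (Finset.mem_univ j)).symm
      have : a j + ∑ k ∈ Finset.univ.erase j, a k + qlast = 0 := by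
        rw [← h1]; exact h0
      linarith
    -- the eigen equation rearranged
    have heq : (μ - (a j : ℂ)) * v j = ∑ k ∈ Finset.univ.erase j, (a k : ℂ) * v k := by
      have h2 : ∑ k, (a k : ℂ) * v k =
          (a j : ℂ) * v j + ∑ k ∈ Finset.univ.erase j, (a k : ℂ) * v k :=
        (Finset.add_sum_erase _ _ (Finset.mem_univ j)).symm
      have h3 := hmul j
      simp only [haA] at h3
      rw [h2] at h3
      linear_combination -h3
    -- upper bound on |μ - a j| * m
    have hub : ‖μ - (a j : ℂ)‖ * m ≤
        ∑ k ∈ Finset.univ.erase j, a k * ‖v k‖ := by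
      rw [← hj, ← norm_mul, heq]
      calc ‖∑ k ∈ Finset.univ.erase j, (a k : ℂ) * v k‖
          ≤ ∑ k ∈ Finset.univ.erase j, ‖(a k : ℂ) * v k‖ :=
            norm_sum_le _ _
        _ ≤ ∑ k ∈ Finset.univ.erase j, a k * ‖v k‖ := by
            apply Finset.sum_le_sum
            intro k hk
            rw [norm_mul, Complex.norm_real, Real.norm_eq_abs,
              abs_of_nonneg (hanneg k (Finset.ne_of_mem_erase hk))]
    have hterm : ∀ k ∈ Finset.univ.erase j, a k * ‖v k‖ ≤ a k * m := by
      intro k hk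
      exact mul_le_mul_of_nonneg_left (hmax' k) (hanneg k (Finset.ne_of_mem_erase hk))
    have hub2 : ∑ k ∈ Finset.univ.erase j, a k * ‖v k‖ ≤
        (-a j - qlast) * m := by
      calc ∑ k ∈ Finset.univ.erase j, a k * ‖v k‖
          ≤ ∑ k ∈ Finset.univ.erase j, a k * m := Finset.sum_le_sum hterm
        _ = (-a j - qlast) * m := by rw [← Finset.sum_mul, hsum]
    -- lower bound
    have hlb : -a j ≤ ‖μ - (a j : ℂ)‖ := by
      have h1 : (μ - (a j : ℂ)).re ≤ ‖μ - (a j : ℂ)‖ := Complex.re_le_norm _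
      have h2 : (μ - (a j : ℂ)).re = μ.re - a j := by simp
      linarith
    have hq0 : qlast = 0 := by
      have hch : (-a j) * m ≤ (-a j - qlast) * m := le_trans
        (mul_le_mul_of_nonneg_right hlb hmpos.le) (le_trans hub hub2)
      nlinarith
    refine ⟨hq0, ?_⟩
    -- equality forces all terms equal
    have hequal : ∑ k ∈ Finset.univ.erase j, a k * ‖v k‖ =
        ∑ k ∈ Finset.univ.erase j, a k * m := by
      have hlow : (-a j) * m ≤ ∑ k ∈ Finset.univ.erase j, a k * ‖v k‖ :=
        le_trans (mul_le_mul_of_nonneg_right hlb hmpos.le) hub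
      have hupeq : ∑ k ∈ Finset.univ.erase j, a k * m = (-a j) * m := by
        rw [← Finset.sum_mul, hsum, hq0]; ring
      have := Finset.sum_le_sum hterm
      linarith
    intro k hkj hkpos
    by_contra hne
    have hlt : a k * ‖v k‖ < a k * m :=
      mul_lt_mul_of_pos_left (lt_of_le_of_ne (hmax' k) hne) hkpos
    have hstrict : ∑ kk ∈ Finset.univ.erase j, a kk * ‖v kk‖ <
        ∑ kk ∈ Finset.univ.erase j, a kk * m := by
      apply Finset.sum_lt_sum hterm
      exact ⟨k, by simp [hkj], hlt⟩
    linarith [hequal]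
  -- propagate max modulus along paths; reach the last state for a contradiction
  have reach : ∀ p : Fin (n + 1),
      Relation.ReflTransGen (fun p q => p ≠ q ∧ 0 < Q p q) i₀.castSucc p →
      ∃ j : Fin n, p = j.castSucc ∧ ‖v j‖ = m := by
    intro p hp
    induction hp with
    | refl => exact ⟨i₀, rfl, rfl⟩
    | @tail b c hb hbc ih =>
        obtain ⟨j, rfl, hj⟩ := ih
        obtain ⟨hne, hpos⟩ := hbc
        obtain ⟨hq0, hprop⟩ := key j hj
        have hcne : c ≠ Fin.last n := by
          intro h; rw [h, hq0] at hpos; exact lt_irrefl 0 hpos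
        obtain ⟨k, rfl⟩ := Fin.exists_castSucc_eq.mpr hcne
        have hkj : k ≠ j := fun h => hne (by rw [h])
        exact ⟨k, rfl, hprop k hkj hpos⟩
  obtain ⟨j, hj, -⟩ := reach (Fin.last n) (hirr _ _)
  exact (Fin.castSucc_lt_last j).ne' hj
end

section
/- Let Q be an irreducible conservative generator matrix on a finite state space of size S ≥ 2 and let Q'_{SS} be the matrix obtained by deleting the last row and column. Then Q'_{SS} is invertible and sign(det(Q'_{SS})) = (−1)^{S+1}, i.e., (−1)^{S+1} det(Q'_{SS}) > 0. -/
open Matrix Finset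

/-- Maximum principle: for `t ≥ 0`, any vector with `A *ᵥ x = t • x` where `A` is the
principal minor of an irreducible generator is nonpositive. -/
lemma gen_eig_nonpos (n : ℕ) (Q : Matrix (Fin (n + 1)) (Fin (n + 1)) ℝ)
    (hoff : ∀ i j, i ≠ j → 0 ≤ Q i j)
    (hrow : ∀ i, ∑ j, Q i j = 0)
    (hirr : ∀ i j : Fin (n + 1),
      Relation.ReflTransGen (fun p q => p ≠ q ∧ 0 < Q p q) i j)
    (t : ℝ) (ht : 0 ≤ t) (x : Fin n → ℝ)
    (hx : Q.submatrix Fin.castSucc Fin.castSucc *ᵥ x = t • x) :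
    ∀ i, x i ≤ 0 := by
  by_contra hcon
  push_neg at hcon
  obtain ⟨i1, hi1⟩ := hcon
  set y : Fin (n + 1) → ℝ := Fin.snoc x 0 with hy
  obtain ⟨i0, -, hi0⟩ := Finset.exists_max_image Finset.univ y ⟨0, Finset.mem_univ 0⟩
  set M := y i0 with hM
  have hylast : y (Fin.last n) = 0 := Fin.snoc_last _ _
  have hycast : ∀ i : Fin n, y i.castSucc = x i := fun i => Fin.snoc_castSucc _ _ _
  have hMpos : 0 < M := lt_of_lt_of_le hi1 (by rw [← hycast i1]; exact hi0 _ (Finset.mem_univ _))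
  have step : ∀ b, y b = M → ∀ c, (b ≠ c ∧ 0 < Q b c) → y c = M := by
    intro b hb c ⟨hbc, hQbc⟩
    have hbne : b ≠ Fin.last n := by
      intro h; rw [h, hylast] at hb; linarith
    obtain ⟨b', rfl⟩ := Fin.exists_castSucc_eq.mpr hbne
    have hxb : x b' = M := by rw [← hycast b']; exact hb
    have heq : ∑ j : Fin (n + 1), Q b'.castSucc j * y j = t * M := by
      rw [Fin.sum_univ_castSucc]
      have := congrFun hx b'
      simp only [Matrix.mulVec, dotProduct, Matrix.submatrix_apply,
        Pi.smul_apply, smul_eq_mul] at this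
      simp only [hycast, hylast, mul_zero, add_zero]
      rw [this, hxb]
    have hsum0 : ∑ j : Fin (n + 1), Q b'.castSucc j * (y j - M) = t * M := by
      have h2 : ∑ j : Fin (n + 1), Q b'.castSucc j * M = 0 := by
        rw [← Finset.sum_mul, hrow, zero_mul]
      calc ∑ j : Fin (n + 1), Q b'.castSucc j * (y j - M)
          = ∑ j : Fin (n + 1), (Q b'.castSucc j * y j - Q b'.castSucc j * M) := by
            congr 1; ext j; ring
        _ = t * M := by rw [Finset.sum_sub_distrib, heq, h2, sub_zero]
    have hterm : ∀ j ∈ Finset.univ, Q b'.castSucc j * (y j - M) ≤ 0 := by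
      intro j _
      rcases eq_or_ne j b'.castSucc with rfl | hj
      · rw [hb]; simp
      · exact mul_nonpos_iff.mpr (Or.inl ⟨hoff _ _ (Ne.symm hj), by
          have := hi0 j (Finset.mem_univ j); linarith⟩)
    have hsum_le : ∑ j : Fin (n + 1), Q b'.castSucc j * (y j - M) ≤ 0 :=
      Finset.sum_nonpos hterm
    have htM : t * M = 0 := le_antisymm (hsum0 ▸ hsum_le) (mul_nonneg ht hMpos.le)
    have hall := (Finset.sum_eq_zero_iff_of_nonpos hterm).mp (by rw [hsum0, htM]) c
      (Finset.mem_univ c)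
    have : y c - M = 0 := by
      rcases mul_eq_zero.mp hall with h | h
      · exact absurd h hQbc.ne'
      · exact h
    linarith [this]
  have reach : ∀ k, Relation.ReflTransGen (fun p q => p ≠ q ∧ 0 < Q p q) i0 k → y k = M := by
    intro k hk
    induction hk with
    | refl => rfl
    | tail _ hstep ih => exact step _ ih _ hstep
  have := reach (Fin.last n) (hirr i0 (Fin.last n))
  rw [hylast] at this
  linarith

lemma shifted_det_ne_zero (n : ℕ) (Q : Matrix (Fin (n + 1)) (Fin (n + 1)) ℝ)
    (hoff : ∀ i j, i ≠ j → 0 ≤ Q i j)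
    (hrow : ∀ i, ∑ j, Q i j = 0)
    (hirr : ∀ i j : Fin (n + 1),
      Relation.ReflTransGen (fun p q => p ≠ q ∧ 0 < Q p q) i j)
    (t : ℝ) (ht : 0 ≤ t) :
    (t • (1 : Matrix (Fin n) (Fin n) ℝ) - Q.submatrix Fin.castSucc Fin.castSucc).det ≠ 0 := by
  set A := Q.submatrix Fin.castSucc Fin.castSucc with hA
  have hinj : Function.Injective (t • (1 : Matrix (Fin n) (Fin n) ℝ) - A).mulVec := by
    intro u v huv
    have hz : (t • (1 : Matrix (Fin n) (Fin n) ℝ) - A) *ᵥ (u - v) = 0 := by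
      rw [Matrix.mulVec_sub, huv, sub_self]
    set z := u - v with hzdef
    have hAz : A *ᵥ z = t • z := by
      have h1 : (t • (1 : Matrix (Fin n) (Fin n) ℝ) - A) *ᵥ z
          = t • z - A *ᵥ z := by
        rw [Matrix.sub_mulVec, Matrix.smul_mulVec, Matrix.one_mulVec]
      rw [h1] at hz
      exact (sub_eq_zero.mp hz).symm
    have h1 := gen_eig_nonpos n Q hoff hrow hirr t ht z hAz
    have h2 := gen_eig_nonpos n Q hoff hrow hirr t ht (-z) (by
      rw [Matrix.mulVec_neg, hAz, smul_neg])
    have hz0 : z = 0 := by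
      funext i
      have ha := h1 i
      have hb := h2 i
      simp only [Pi.neg_apply] at hb
      show z i = 0
      linarith
    exact sub_eq_zero.mp hz0
  have := Matrix.mulVec_injective_iff_isUnit.mp hinj
  have := (Matrix.isUnit_iff_isUnit_det _).mp this
  exact this.ne_zero

lemma charpoly_eval_eq (m : ℕ) (A : Matrix (Fin m) (Fin m) ℝ) (t : ℝ) :
    A.charpoly.eval t = (t • (1 : Matrix (Fin m) (Fin m) ℝ) - A).det := by
  rw [Matrix.charpoly, _root_.eval_det, Matrix.matPolyEquiv_charmatrix]
  simp
  congr 2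
  rw [Matrix.smul_one_eq_diagonal]

/-- For an irreducible conservative generator `Q` on `S = n+1 ≥ 2` states, the
principal minor `Q'_{SS}` obtained by deleting the last row and column is
invertible, and the sign of its determinant is `(-1)^(S+1)`. -/
theorem minor_det_sign (n : ℕ) (hn : 1 ≤ n)
    (Q : Matrix (Fin (n + 1)) (Fin (n + 1)) ℝ)
    (hoff : ∀ i j, i ≠ j → 0 ≤ Q i j)
    (hrow : ∀ i, ∑ j, Q i j = 0)
    (hirr : ∀ i j : Fin (n + 1),
      Relation.ReflTransGen (fun p q => p ≠ q ∧ 0 < Q p q) i j) :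
    IsUnit (Q.submatrix Fin.castSucc Fin.castSucc).det ∧
      0 < (-1 : ℝ) ^ (n + 1 + 1) * (Q.submatrix Fin.castSucc Fin.castSucc).det := by
  set A := Q.submatrix Fin.castSucc Fin.castSucc with hA
  have hne : ∀ t : ℝ, 0 ≤ t → (t • (1 : Matrix (Fin n) (Fin n) ℝ) - A).det ≠ 0 :=
    fun t ht => shifted_det_ne_zero n Q hoff hrow hirr t ht
  set g : ℝ → ℝ := fun t => (t • (1 : Matrix (Fin n) (Fin n) ℝ) - A).det with hg
  have hgc : Continuous g := by
    apply Continuous.matrix_det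
    exact (continuous_id.smul continuous_const).sub continuous_const
  have hgp : g = fun t => A.charpoly.eval t := by
    funext t; exact (charpoly_eval_eq n A t).symm
  have htop : Filter.Tendsto g Filter.atTop Filter.atTop := by
    rw [hgp]
    apply Polynomial.tendsto_atTop_of_leadingCoeff_nonneg
    · rw [Matrix.charpoly_degree_eq_dim, Fintype.card_fin]
      exact_mod_cast hn
    · rw [(Matrix.charpoly_monic A).leadingCoeff]
      exact zero_le_one
  obtain ⟨T, hT⟩ := ((htop.eventually_gt_atTop 0).and (Filter.eventually_ge_atTop 0)).exists
  have hg0 : 0 < g 0 := by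
    rcases lt_trichotomy (g 0) 0 with h | h | h
    · exfalso
      obtain ⟨c, hc, hgc0⟩ := intermediate_value_Icc hT.2 hgc.continuousOn
        (show (0 : ℝ) ∈ Set.Icc (g 0) (g T) from ⟨h.le, hT.1.le⟩)
      exact hne c hc.1 hgc0
    · exact absurd h (hne 0 le_rfl)
    · exact h
  have h0 : g 0 = (-1 : ℝ) ^ n * A.det := by
    simp only [hg, zero_smul, zero_sub, Matrix.det_neg, Fintype.card_fin]
  have hsign : (-1 : ℝ) ^ (n + 1 + 1) = (-1 : ℝ) ^ n := by
    rw [pow_succ, pow_succ]; ring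
  constructor
  · refine isUnit_iff_ne_zero.mpr fun h => ?_
    rw [h0, h, mul_zero] at hg0
    exact lt_irrefl 0 hg0
  · rw [hsign, ← h0]; exact hg0
end

section
/- The stationary distribution of a convex combination of irreducible generators is a convex combination of their stationary distributions: if Q¹,…,Qⁿ are irreducible conservative generators on {1,…,S} such that every convex combination is also irreducible, and Q = ∑_k λ_k Q^k with λ_k ≥ 0, ∑ λ_k = 1, then the unique stationary distribution x of Q lies in the convex hull of the stationary distributions x¹,…,xⁿ of Q¹,…,Qⁿ — provided the Q^k all arise as Q^{d} for deterministic strategies d from a common family Q_{ija} and Q = Q^π for a stationary strategy π. Explicitly, x = ∑_{(a_1,…,a_S)} μ_{(a_1,…,a_S)} x^{d^{(a_1,…,a_S)}} with μ_{(a_1,…,a_S)} = π_{1a_1}⋯π_{Sa_S} det(Q̃^{d^{(a_1,…,a_S)}})/det(Q̃^π) ≥ 0 summing to 1. -/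
/-!
Write `Q̃` for `tildeMat`. Rows of a generator sum to zero and irreducibility forces a left null
vector with one positive entry to be positive everywhere, so `Q̃^π` is invertible for every
strategy `π`, and a stationary distribution `x` of `Q^π` solves `Q̃^π x = e_last`. By Cramer's
rule `det Q̃^π · x_i` is the determinant of `Q̃^π` with column `i` replaced by `e_last`. Row `j`
of its transpose is the `π_j`-average of the same rows built from the single actions, so
multilinearity of the determinant expands it as `∑_d (∏_k π_{k d(k)}) det Q̃^d · x^d_i`. Summing
over `i` gives `det Q̃^π = ∑_d (∏_k π_{k d(k)}) det Q̃^d`. The weights are nonnegative because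
`det Q̃^π` is continuous and never vanishes on the connected set of strategies, so it has the
same sign at `π` and at every deterministic `d`.
-/

/-- The strategy-averaged generator `Q^π`. -/
def aggGen {n : ℕ} {𝒜 : Type*} [Fintype 𝒜]
    (Q : 𝒜 → Matrix (Fin (n + 1)) (Fin (n + 1)) ℝ)
    (π : Fin (n + 1) → 𝒜 → ℝ) : Matrix (Fin (n + 1)) (Fin (n + 1)) ℝ :=
  Matrix.of fun i j => ∑ a, Q a i j * π i a

/-- The deterministic generator `Q^d`. -/
def detGen {n : ℕ} {𝒜 : Type*}
    (Q : 𝒜 → Matrix (Fin (n + 1)) (Fin (n + 1)) ℝ)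
    (d : Fin (n + 1) → 𝒜) : Matrix (Fin (n + 1)) (Fin (n + 1)) ℝ :=
  Matrix.of fun i j => Q (d i) i j

/-- `M̃`: the transpose of `M` with the last row replaced by ones. -/
def tildeMat {n : ℕ} (M : Matrix (Fin (n + 1)) (Fin (n + 1)) ℝ) :
    Matrix (Fin (n + 1)) (Fin (n + 1)) ℝ :=
  Matrix.of fun i j => if i = Fin.last n then 1 else M j i

open Matrix Finset

theorem Matrix.det_updateCol_of_mulVec_eq {ι R : Type*} [Fintype ι] [DecidableEq ι] [CommRing R]
    {A : Matrix ι ι R} {y b : ι → R} (h : A *ᵥ y = b) (i : ι) :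
    (A.updateCol i b).det = A.det * y i := by
  rw [← cramer_apply, cramer_eq_adjugate_mulVec, ← h, mulVec_mulVec, adjugate_mul,
    smul_mulVec, one_mulVec, Pi.smul_apply, smul_eq_mul]

theorem Matrix.det_of_sum_smul {ι α R : Type*} [Fintype ι] [DecidableEq ι] [Fintype α]
    [CommRing R] (c : ι → α → R) (w : ι → α → ι → R) :
    (of fun j => ∑ a, c j a • w j a).det =
      ∑ d : ι → α, (∏ j, c j (d j)) * (of fun j => w j (d j)).det := by
  change detRowAlternating.toMultilinearMap (fun j => ∑ a, c j a • w j a) = _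
  rw [MultilinearMap.map_sum]
  refine sum_congr rfl fun d _ => ?_
  rw [MultilinearMap.map_smul_univ, smul_eq_mul]
  rfl

theorem IsPreconnected.mul_pos_of_ne_zero {X : Type*} [TopologicalSpace X] {s : Set X}
    (hs : IsPreconnected s) {f : X → ℝ} (hf : ContinuousOn f s) (h0 : ∀ x ∈ s, f x ≠ 0)
    {a b : X} (ha : a ∈ s) (hb : b ∈ s) : 0 < f a * f b := by
  by_contra! hle
  have hzero : (0 : ℝ) ∈ f '' s := by
    rcases mul_nonpos_iff.mp hle with ⟨ha0, hb0⟩ | ⟨ha0, hb0⟩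
    · exact hs.intermediate_value hb ha hf ⟨hb0, ha0⟩
    · exact hs.intermediate_value ha hb hf ⟨ha0, hb0⟩
  obtain ⟨x, hx, hfx⟩ := hzero
  exact h0 x hx hfx

section Generator

variable {ι : Type*} [Fintype ι]

theorem Matrix.sum_vecMul_eq_zero {M : Matrix ι ι ℝ} (hrow : ∀ i, ∑ j, M i j = 0)
    (v : ι → ℝ) : ∑ i, vecMul v M i = 0 := by
  have hM : M *ᵥ 1 = 0 := funext fun i => by simpa [mulVec, dotProduct] using hrow i
  simpa [dotProduct, hM] using (dotProduct_mulVec v M 1).symm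

theorem Matrix.apply_eq_zero_of_vecMul_eq_zero {M : Matrix ι ι ℝ}
    (hoff : ∀ i j, i ≠ j → 0 ≤ M i j) (hrow : ∀ i, ∑ j, M i j = 0)
    {v : ι → ℝ} (hv : vecMul v M = 0) {p q : ι} (hp : 0 < v p) (hq : v q ≤ 0) :
    M p q = 0 := by
  classical
  set T := univ.filter fun i => 0 < v i
  have hpT : p ∈ T := by simpa [T] using hp
  have hqT : q ∈ Tᶜ := by simpa [T] using hq
  have hcross : ∀ i ∉ T, ∀ j ∈ T, 0 ≤ M i j := fun i hi j hj =>
    hoff i j (ne_of_mem_of_not_mem hj hi).symm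
  -- summing `v M` over the columns in `T` gives `0` as a sum of nonpositive terms
  have hterm : ∀ i ∈ univ, v i * ∑ j ∈ T, M i j ≤ 0 := by
    intro i _
    by_cases hi : i ∈ T
    · have hout : 0 ≤ ∑ j ∈ Tᶜ, M i j := sum_nonneg fun j hj =>
        hoff i j (ne_of_mem_of_not_mem hi (mem_compl.mp hj))
      have hin : ∑ j ∈ T, M i j = -∑ j ∈ Tᶜ, M i j := by
        linarith [sum_add_sum_compl T (M i), hrow i]
      have : 0 < v i := by simpa [T] using hi
      nlinarith
    · have : v i ≤ 0 := by simpa [T] using hi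
      exact mul_nonpos_of_nonpos_of_nonneg this (sum_nonneg (hcross i hi))
  have htotal : ∑ i, v i * ∑ j ∈ T, M i j = 0 := by
    simp_rw [mul_sum]
    rw [sum_comm]
    exact sum_eq_zero fun j _ => by simpa [vecMul, dotProduct] using congrFun hv j
  have hpin : ∑ j ∈ T, M p j = 0 := by
    have := (sum_eq_zero_iff_of_nonpos hterm).mp htotal p (mem_univ p)
    exact (mul_eq_zero.mp this).resolve_left hp.ne'
  have hpout : ∑ j ∈ Tᶜ, M p j = 0 := by
    linarith [sum_add_sum_compl T (M p), hrow p]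
  exact (sum_eq_zero_iff_of_nonneg fun j hj =>
    hoff p j (ne_of_mem_of_not_mem hpT (mem_compl.mp hj))).mp hpout q hqT

theorem Matrix.pos_of_vecMul_eq_zero {M : Matrix ι ι ℝ}
    (hoff : ∀ i j, i ≠ j → 0 ≤ M i j) (hrow : ∀ i, ∑ j, M i j = 0)
    (hirr : ∀ i j, Relation.ReflTransGen (fun p q => p ≠ q ∧ 0 < M p q) i j)
    {v : ι → ℝ} (hv : vecMul v M = 0) {i₀ : ι} (hi₀ : 0 < v i₀) (j : ι) : 0 < v j := by
  induction hirr i₀ j with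
  | refl => exact hi₀
  | tail _ hstep ih =>
    by_contra hle
    exact hstep.2.ne' (apply_eq_zero_of_vecMul_eq_zero hoff hrow hv ih (not_lt.mp hle))

theorem Matrix.eq_zero_of_vecMul_eq_zero_of_sum_eq_zero {M : Matrix ι ι ℝ}
    (hoff : ∀ i j, i ≠ j → 0 ≤ M i j) (hrow : ∀ i, ∑ j, M i j = 0)
    (hirr : ∀ i j, Relation.ReflTransGen (fun p q => p ≠ q ∧ 0 < M p q) i j)
    {v : ι → ℝ} (hv : vecMul v M = 0) (hsum : ∑ i, v i = 0) : v = 0 := by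
  have hnonpos : ∀ w : ι → ℝ, vecMul w M = 0 → ∑ i, w i = 0 → ∀ i, w i ≤ 0 := by
    intro w hw hws i
    by_contra! hi
    have := sum_pos (fun j _ => pos_of_vecMul_eq_zero hoff hrow hirr hw hi j) ⟨i, mem_univ i⟩
    exact this.ne' hws
  have hneg := hnonpos (-v) (by rw [neg_vecMul, hv, neg_zero]) (by simp [hsum])
  exact funext fun i => le_antisymm (hnonpos v hv hsum i) (by simpa using hneg i)

end Generator

section Tilde

variable {n : ℕ}

theorem tildeMat_mulVec_apply (M : Matrix (Fin (n + 1)) (Fin (n + 1)) ℝ) (y : Fin (n + 1) → ℝ)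
    (i : Fin (n + 1)) :
    (tildeMat M *ᵥ y) i = if i = Fin.last n then ∑ j, y j else vecMul y M i := by
  by_cases h : i = Fin.last n <;> simp [mulVec, vecMul, dotProduct, tildeMat, h, mul_comm]

theorem tildeMat_mulVec_eq_single {M : Matrix (Fin (n + 1)) (Fin (n + 1)) ℝ} {y : Fin (n + 1) → ℝ}
    (hy : vecMul y M = 0) (hs : ∑ i, y i = 1) : tildeMat M *ᵥ y = Pi.single (Fin.last n) 1 := by
  funext i
  by_cases h : i = Fin.last n <;> simp [tildeMat_mulVec_apply, h, hy, hs]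

theorem det_tildeMat_ne_zero {M : Matrix (Fin (n + 1)) (Fin (n + 1)) ℝ}
    (hoff : ∀ i j, i ≠ j → 0 ≤ M i j) (hrow : ∀ i, ∑ j, M i j = 0)
    (hirr : ∀ i j, Relation.ReflTransGen (fun p q => p ≠ q ∧ 0 < M p q) i j) :
    (tildeMat M).det ≠ 0 := by
  intro hdet
  obtain ⟨v, hv0, hv⟩ := exists_mulVec_eq_zero_iff.mpr hdet
  have hsum : ∑ j, v j = 0 := by simpa [tildeMat_mulVec_apply] using congrFun hv (Fin.last n)
  have hne_last : ∀ i ≠ Fin.last n, vecMul v M i = 0 := fun i hi => by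
    simpa [tildeMat_mulVec_apply, hi] using congrFun hv i
  -- `tildeMat` drops the last equation of `v M = 0`; it follows from the others
  have hlast : vecMul v M (Fin.last n) = 0 := by
    have htotal := sum_vecMul_eq_zero hrow v
    rwa [← add_sum_erase _ _ (mem_univ (Fin.last n)),
      sum_eq_zero fun i hi => hne_last i (ne_of_mem_erase hi), add_zero] at htotal
  have hker : vecMul v M = 0 := funext fun i => by
    by_cases h : i = Fin.last n
    · rw [h, hlast]; rfl
    · exact hne_last i h
  exact hv0 (eq_zero_of_vecMul_eq_zero_of_sum_eq_zero hoff hrow hirr hker hsum)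

theorem transpose_updateCol_tildeMat (M : Matrix (Fin (n + 1)) (Fin (n + 1)) ℝ) (i : Fin (n + 1))
    (b : Fin (n + 1) → ℝ) :
    ((tildeMat M).updateCol i b)ᵀ =
      of fun j => if j = i then b else Function.update (M j) (Fin.last n) 1 := by
  ext j k
  by_cases hj : j = i <;> by_cases hk : k = Fin.last n <;>
    simp [tildeMat, hj, hk]

end Tilde

section Aggregate

variable {n : ℕ} {𝒜 : Type*} [Fintype 𝒜] (Q : 𝒜 → Matrix (Fin (n + 1)) (Fin (n + 1)) ℝ)

theorem aggGen_apply_nonneg (hoff : ∀ a i j, i ≠ j → 0 ≤ Q a i j) {π : Fin (n + 1) → 𝒜 → ℝ}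
    (hpos : ∀ i a, 0 ≤ π i a) {i j : Fin (n + 1)} (hij : i ≠ j) : 0 ≤ aggGen Q π i j :=
  sum_nonneg fun a _ => mul_nonneg (hoff a i j hij) (hpos i a)

theorem sum_aggGen_apply (hrow : ∀ a i, ∑ j, Q a i j = 0) (π : Fin (n + 1) → 𝒜 → ℝ)
    (i : Fin (n + 1)) : ∑ j, aggGen Q π i j = 0 := by
  simp only [aggGen, of_apply]
  rw [sum_comm]
  simp [← sum_mul, hrow]

theorem detGen_eq_aggGen [DecidableEq 𝒜] (d : Fin (n + 1) → 𝒜) :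
    detGen Q d = aggGen Q fun i => Pi.single (d i) 1 := by
  ext i j
  simp [aggGen, detGen, Pi.single_apply]

theorem continuous_det_tildeMat_aggGen :
    Continuous fun π : Fin (n + 1) → 𝒜 → ℝ => (tildeMat (aggGen Q π)).det := by
  refine Continuous.matrix_det (continuous_matrix fun i j => ?_)
  by_cases h : i = Fin.last n
  · simp only [tildeMat, of_apply, h, if_true]
    exact continuous_const
  · simp only [tildeMat, aggGen, of_apply, h, if_false]
    fun_prop

theorem det_tildeMat_aggGen_ne_zero (hoff : ∀ a i j, i ≠ j → 0 ≤ Q a i j)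
    (hrow : ∀ a i, ∑ j, Q a i j = 0) {π : Fin (n + 1) → 𝒜 → ℝ}
    (hpos : ∀ i a, 0 ≤ π i a)
    (hirr : ∀ i j, Relation.ReflTransGen (fun p q => p ≠ q ∧ 0 < aggGen Q π p q) i j) :
    (tildeMat (aggGen Q π)).det ≠ 0 :=
  det_tildeMat_ne_zero (fun _ _ => aggGen_apply_nonneg Q hoff hpos) (sum_aggGen_apply Q hrow π)
    hirr

theorem det_tildeMat_aggGen_mul_pos (hoff : ∀ a i j, i ≠ j → 0 ≤ Q a i j)
    (hrow : ∀ a i, ∑ j, Q a i j = 0)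
    (hirr : ∀ π : Fin (n + 1) → 𝒜 → ℝ,
      (∀ i a, 0 ≤ π i a) → (∀ i, ∑ a, π i a = 1) →
      ∀ i j : Fin (n + 1),
        Relation.ReflTransGen (fun p q => p ≠ q ∧ 0 < aggGen Q π p q) i j)
    {π₁ π₂ : Fin (n + 1) → 𝒜 → ℝ}
    (hpos₁ : ∀ i a, 0 ≤ π₁ i a) (hsum₁ : ∀ i, ∑ a, π₁ i a = 1)
    (hpos₂ : ∀ i a, 0 ≤ π₂ i a) (hsum₂ : ∀ i, ∑ a, π₂ i a = 1) :
    0 < (tildeMat (aggGen Q π₁)).det * (tildeMat (aggGen Q π₂)).det := by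
  have hconv : Convex ℝ (Set.univ.pi fun _ : Fin (n + 1) => stdSimplex ℝ 𝒜) :=
    convex_pi fun _ _ => convex_stdSimplex ℝ 𝒜
  refine hconv.isPreconnected.mul_pos_of_ne_zero
    (continuous_det_tildeMat_aggGen Q).continuousOn (fun π hπ => ?_)
    (Set.mem_univ_pi.mpr fun i => ⟨hpos₁ i, hsum₁ i⟩)
    (Set.mem_univ_pi.mpr fun i => ⟨hpos₂ i, hsum₂ i⟩)
  have hpos i := (Set.mem_univ_pi.mp hπ i).1
  have hsum i := (Set.mem_univ_pi.mp hπ i).2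
  exact det_tildeMat_aggGen_ne_zero Q hoff hrow hpos (hirr π hpos hsum)

theorem det_updateCol_tildeMat_aggGen {π : Fin (n + 1) → 𝒜 → ℝ} (hsum : ∀ i, ∑ a, π i a = 1)
    (i : Fin (n + 1)) (b : Fin (n + 1) → ℝ) :
    ((tildeMat (aggGen Q π)).updateCol i b).det =
      ∑ d : Fin (n + 1) → 𝒜, (∏ k, π k (d k)) * ((tildeMat (detGen Q d)).updateCol i b).det := by
  classical
  set r : Fin (n + 1) → 𝒜 → Fin (n + 1) → ℝ :=
    fun j a => if j = i then b else Function.update (Q a j) (Fin.last n) 1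
  have hrows : ((tildeMat (aggGen Q π)).updateCol i b)ᵀ = of fun j => ∑ a, π j a • r j a := by
    rw [transpose_updateCol_tildeMat]
    ext j k
    by_cases hj : j = i <;> by_cases hk : k = Fin.last n <;>
      simp [r, aggGen, hj, hk, ← sum_mul, hsum, mul_comm]
  rw [← det_transpose, hrows, det_of_sum_smul]
  refine sum_congr rfl fun d _ => ?_
  rw [← det_transpose ((tildeMat (detGen Q d)).updateCol i b), transpose_updateCol_tildeMat]
  rfl

theorem det_tildeMat_detGen_mul_pos (hoff : ∀ a i j, i ≠ j → 0 ≤ Q a i j)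
    (hrow : ∀ a i, ∑ j, Q a i j = 0)
    (hirr : ∀ π : Fin (n + 1) → 𝒜 → ℝ,
      (∀ i a, 0 ≤ π i a) → (∀ i, ∑ a, π i a = 1) →
      ∀ i j : Fin (n + 1),
        Relation.ReflTransGen (fun p q => p ≠ q ∧ 0 < aggGen Q π p q) i j)
    (d : Fin (n + 1) → 𝒜) {π : Fin (n + 1) → 𝒜 → ℝ}
    (hpos : ∀ i a, 0 ≤ π i a) (hsum : ∀ i, ∑ a, π i a = 1) :
    0 < (tildeMat (detGen Q d)).det * (tildeMat (aggGen Q π)).det := by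
  classical
  have hpos_d (i : Fin (n + 1)) (a : 𝒜) : 0 ≤ (Pi.single (d i) 1 : 𝒜 → ℝ) a := by
    rw [Pi.single_apply]
    positivity
  rw [detGen_eq_aggGen]
  exact det_tildeMat_aggGen_mul_pos Q hoff hrow hirr hpos_d (fun i => by simp) hpos hsum

end Aggregate

theorem stationary_dist_convex_combination_general {n : ℕ} {𝒜 : Type*}
    [Fintype 𝒜]
    (Q : 𝒜 → Matrix (Fin (n + 1)) (Fin (n + 1)) ℝ)
    (hoff : ∀ a i j, i ≠ j → 0 ≤ Q a i j)
    (hrow : ∀ a i, ∑ j, Q a i j = 0)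
    (hirr : ∀ π : Fin (n + 1) → 𝒜 → ℝ,
      (∀ i a, 0 ≤ π i a) → (∀ i, ∑ a, π i a = 1) →
      ∀ i j : Fin (n + 1),
        Relation.ReflTransGen (fun p q => p ≠ q ∧ 0 < aggGen Q π p q) i j)
    (π : Fin (n + 1) → 𝒜 → ℝ)
    (hpos : ∀ i a, 0 ≤ π i a) (hsum : ∀ i, ∑ a, π i a = 1)
    (x : Fin (n + 1) → ℝ)
    (hx1 : ∑ i, x i = 1)
    (hx : Matrix.vecMul x (aggGen Q π) = 0)
    (xd : (Fin (n + 1) → 𝒜) → Fin (n + 1) → ℝ)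
    (hxd : ∀ d : Fin (n + 1) → 𝒜, (∀ i, 0 ≤ xd d i) ∧ (∑ i, xd d i = 1) ∧
      Matrix.vecMul (xd d) (detGen Q d) = 0) :
    (∀ d : Fin (n + 1) → 𝒜,
      0 ≤ (∏ k, π k (d k)) * (tildeMat (detGen Q d)).det /
        (tildeMat (aggGen Q π)).det) ∧
    (∑ d : Fin (n + 1) → 𝒜,
      (∏ k, π k (d k)) * (tildeMat (detGen Q d)).det /
        (tildeMat (aggGen Q π)).det) = 1 ∧
    ∀ i, x i = ∑ d : Fin (n + 1) → 𝒜,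
      ((∏ k, π k (d k)) * (tildeMat (detGen Q d)).det /
        (tildeMat (aggGen Q π)).det) * xd d i := by
  set D := (tildeMat (aggGen Q π)).det
  have hD : D ≠ 0 := det_tildeMat_aggGen_ne_zero Q hoff hrow hpos (hirr π hpos hsum)
  have hcramer : ∀ i, D * x i =
      ∑ d, (∏ k, π k (d k)) * ((tildeMat (detGen Q d)).det * xd d i) := by
    intro i
    rw [← det_updateCol_of_mulVec_eq (tildeMat_mulVec_eq_single hx hx1),
      det_updateCol_tildeMat_aggGen Q hsum]
    refine sum_congr rfl fun d _ => ?_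
    rw [det_updateCol_of_mulVec_eq (tildeMat_mulVec_eq_single (hxd d).2.2 (hxd d).2.1)]
  have htotal : D = ∑ d, (∏ k, π k (d k)) * (tildeMat (detGen Q d)).det := by
    have := sum_congr rfl fun i (_ : i ∈ univ) => hcramer i
    rw [← mul_sum, hx1, mul_one, sum_comm] at this
    simpa [← mul_sum, (hxd _).2.1] using this
  refine ⟨fun d => ?_, by rw [← sum_div, ← htotal, div_self hD], fun i => ?_⟩
  · have hsign := det_tildeMat_detGen_mul_pos Q hoff hrow hirr d hpos hsum
    rw [mul_div_assoc]
    exact mul_nonneg (prod_nonneg fun k _ => hpos k (d k))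
      (div_pos_iff.mpr (mul_pos_iff.mp hsign)).le
  · rw [← mul_div_cancel_left₀ (x i) hD, hcramer, sum_div]
    exact sum_congr rfl fun d _ => by ring

/-- The stationary distribution of the aggregated generator `Q^π` is the convex
combination of the stationary distributions `x^d` of the deterministic
generators, with explicit weights
`μ_d = (∏ᵢ π_{i d(i)}) det(Q̃^d) / det(Q̃^π) ≥ 0` summing to `1`. -/
theorem stationary_dist_convex_combination {n : ℕ} {𝒜 : Type*}
    [Fintype 𝒜] [DecidableEq 𝒜] [Nonempty 𝒜]
    (Q : 𝒜 → Matrix (Fin (n + 1)) (Fin (n + 1)) ℝ)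
    (hoff : ∀ a i j, i ≠ j → 0 ≤ Q a i j)
    (hrow : ∀ a i, ∑ j, Q a i j = 0)
    (hirr : ∀ π : Fin (n + 1) → 𝒜 → ℝ,
      (∀ i a, 0 ≤ π i a) → (∀ i, ∑ a, π i a = 1) →
      ∀ i j : Fin (n + 1),
        Relation.ReflTransGen (fun p q => p ≠ q ∧ 0 < aggGen Q π p q) i j)
    (π : Fin (n + 1) → 𝒜 → ℝ)
    (hpos : ∀ i a, 0 ≤ π i a) (hsum : ∀ i, ∑ a, π i a = 1)
    (x : Fin (n + 1) → ℝ)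
    (hx0 : ∀ i, 0 ≤ x i) (hx1 : ∑ i, x i = 1)
    (hx : Matrix.vecMul x (aggGen Q π) = 0)
    (xd : (Fin (n + 1) → 𝒜) → Fin (n + 1) → ℝ)
    (hxd : ∀ d : Fin (n + 1) → 𝒜, (∀ i, 0 ≤ xd d i) ∧ (∑ i, xd d i = 1) ∧
      Matrix.vecMul (xd d) (detGen Q d) = 0) :
    (∀ d : Fin (n + 1) → 𝒜,
      0 ≤ (∏ k, π k (d k)) * (tildeMat (detGen Q d)).det /
        (tildeMat (aggGen Q π)).det) ∧
    (∑ d : Fin (n + 1) → 𝒜,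
      (∏ k, π k (d k)) * (tildeMat (detGen Q d)).det /
        (tildeMat (aggGen Q π)).det) = 1 ∧
    ∀ i, x i = ∑ d : Fin (n + 1) → 𝒜,
      ((∏ k, π k (d k)) * (tildeMat (detGen Q d)).det /
        (tildeMat (aggGen Q π)).det) * xd d i :=
  stationary_dist_convex_combination_general Q hoff hrow hirr π hpos hsum x hx1 hx xd hxd
end
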